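/- If G₁ ≤ G₂ are finite permutation groups on the same finite set and F_{G₁}(-a) = 0 for some positive integer a, then F_{G₂}(-a) = 0. -/

import Mathlib

open Polynomial

open scoped Classical

noncomputable section

/-- The number of cycles (including fixed points) of a permutation `g` on `Ω`. -/
def cycleCount {Ω : Type*} [Fintype Ω] (g : Equiv.Perm Ω) : ℕ :=
  Nat.card (MulAction.orbitRel.Quotient (Subgroup.zpowers g) Ω)

/-- The cycle polynomial `F_G(x) = ∑_{g ∈ G} x^{c(g)}`. -/
def cyclePoly {Ω : Type*} [Fintype Ω] (G : Subgroup (Equiv.Perm Ω)) : Polynomial ℤ :=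
  ∑ g : G, (X : Polynomial ℤ) ^ cycleCount (g : Equiv.Perm Ω)

/-!
Since `sign g = (-1) ^ (n + c(g))` and `a ^ c(g)` counts the colourings `f : Ω → Fin a` fixed
by `g`, double counting gives `F_G(-a) = (-1)^n ∑_f ∑_{g ∈ Stab_G(f)} sign g`. Each inner sum is
`|Stab_G(f)|` or `0` according as the sign character of `Stab_G(f)` is trivial or not. Hence
`F_G(-a) = 0` iff every colouring is fixed by an odd permutation of `G`, and this condition passes
from `G₁` to any `G₂ ≥ G₁`.
-/

namespace Equiv.Perm

open MulAction

variable {Ω : Type*}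

theorem orbitRel_zpowers_iff_sameCycle (g : Perm Ω) {x y : Ω} :
    orbitRel (Subgroup.zpowers g) Ω x y ↔ g.SameCycle x y := by
  rw [orbitRel_apply, mem_orbit_iff, sameCycle_comm]
  constructor
  · rintro ⟨⟨_, k, rfl⟩, h⟩
    exact ⟨k, h⟩
  · rintro ⟨k, h⟩
    exact ⟨⟨g ^ k, k, rfl⟩, h⟩

variable [Fintype Ω]

def fixedPointOrCycle (g : Perm Ω) (x : Ω) : Function.fixedPoints g ⊕ g.cycleFactorsFinset :=
  if hx : g x = x then .inl ⟨x, hx⟩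
  else .inr ⟨g.cycleOf x, cycleOf_mem_cycleFactorsFinset_iff.mpr (mem_support.mpr hx)⟩

theorem sameCycle_iff_fixedPointOrCycle_eq (g : Perm Ω) {x y : Ω} :
    g.SameCycle x y ↔ g.fixedPointOrCycle x = g.fixedPointOrCycle y := by
  unfold fixedPointOrCycle
  by_cases hx : g x = x <;> by_cases hy : g y = y <;> simp only [hx, hy, dite_true, dite_false]
  · rw [Sum.inl.injEq]
    exact ⟨fun h => Subtype.ext (h.eq_of_left hx), fun h => by rw [Subtype.mk.inj h]⟩
  · simp only [reduceCtorEq, iff_false]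
    exact fun h => hy (h.apply_eq_self_iff.mp hx)
  · simp only [reduceCtorEq, iff_false]
    exact fun h => hx (h.apply_eq_self_iff.mpr hy)
  · simp only [Sum.inr.injEq, Subtype.mk.injEq]
    exact sameCycle_iff_cycleOf_eq_of_mem_support (mem_support.mpr hx) (mem_support.mpr hy)

theorem fixedPointOrCycle_surjective (g : Perm Ω) : Function.Surjective g.fixedPointOrCycle := by
  rintro (⟨x, hx⟩ | ⟨c, hc⟩)
  · exact ⟨x, by simp [fixedPointOrCycle, show g x = x from hx]⟩
  · obtain ⟨x, hx⟩ := (mem_cycleFactorsFinset_iff.mp hc).1.nonempty_support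
    have hgx : g x ≠ x := by
      rwa [← (mem_cycleFactorsFinset_iff.mp hc).2 x hx, ← mem_support]
    refine ⟨x, ?_⟩
    simp [fixedPointOrCycle, hgx, cycle_is_cycleOf hx hc]

theorem cycleCount_eq_card_fixedPoints_add_card_cycleFactorsFinset (g : Perm Ω) :
    cycleCount g = Fintype.card (Function.fixedPoints g) + g.cycleFactorsFinset.card := by
  have : orbitRel (Subgroup.zpowers g) Ω = Setoid.ker g.fixedPointOrCycle :=
    Setoid.ext fun _ _ =>
      g.orbitRel_zpowers_iff_sameCycle.trans g.sameCycle_iff_fixedPointOrCycle_eq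
  rw [cycleCount, orbitRel.Quotient, this,
    Nat.card_congr (Setoid.quotientKerEquivOfSurjective _ g.fixedPointOrCycle_surjective),
    Nat.card_sum, Nat.card_eq_fintype_card, Nat.card_eq_fintype_card, Fintype.card_coe]

theorem sign_eq_neg_one_pow_card_add_cycleCount (g : Perm Ω) :
    (sign g : ℤ) = (-1) ^ (Fintype.card Ω + cycleCount g) := by
  obtain ⟨m, hm⟩ := Nat.exists_eq_add_of_le g.sum_cycleType_le
  have hcard : Multiset.card g.cycleType = g.cycleFactorsFinset.card := by
    rw [cycleType_def, Multiset.card_map]; rfl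
  rw [cycleCount_eq_card_fixedPoints_add_card_cycleFactorsFinset, card_fixedPoints,
    sign_of_cycleType, ← hcard, hm, Nat.add_sub_cancel_left, Units.val_pow_eq_pow_val,
    Units.val_neg, Units.val_one]
  rw [show g.cycleType.sum + m + (m + Multiset.card g.cycleType)
    = g.cycleType.sum + Multiset.card g.cycleType + 2 * m by ring, pow_add _ _ (2 * m), pow_mul]
  simp

end Equiv.Perm

section Colorings

open MulAction

attribute [local instance] arrowAction

variable {G Ω : Type*} [Group G] [MulAction G Ω]

def fixedByArrowEquiv (α : Type*) (g : G) :
    fixedBy (Ω → α) g ≃ (orbitRel.Quotient (Subgroup.zpowers g) Ω → α) where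
  toFun f := Quotient.lift f.1 fun x y hxy => by
    obtain ⟨⟨_, k, rfl⟩, rfl⟩ := mem_orbit_iff.mp (orbitRel_apply.mp hxy)
    have h : f.1 ((g ^ (-k))⁻¹ • y) = f.1 y := congrFun (mem_fixedBy_zpow f.2 (-k)) y
    rwa [zpow_neg, inv_inv] at h
  invFun F := ⟨fun x => F (Quotient.mk _ x), funext fun x => congrArg F <| Quotient.sound <|
    orbitRel_apply.mpr ⟨⟨g⁻¹, Subgroup.inv_mem _ (Subgroup.mem_zpowers g)⟩, rfl⟩⟩
  left_inv f := rfl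
  right_inv F := funext fun q => Quotient.inductionOn q fun _ => rfl

theorem card_fixedBy_arrowAction [Finite Ω] (α : Type*) (g : G) :
    Nat.card (fixedBy (Ω → α) g) =
      Nat.card α ^ Nat.card (orbitRel.Quotient (Subgroup.zpowers g) Ω) := by
  rw [Nat.card_congr (fixedByArrowEquiv α g), Nat.card_fun]

end Colorings

section DoubleCounting

open MulAction

theorem sum_card_fixedBy_nsmul {G X M : Type*} [Group G] [Fintype G] [MulAction G X] [Fintype X]
    [AddCommMonoid M] (φ : G → M) :
    ∑ g, Nat.card (fixedBy X g) • φ g = ∑ x : X, ∑ g : stabilizer G x, φ g := by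
  calc ∑ g, Nat.card (fixedBy X g) • φ g = ∑ g, ∑ x : X, if g • x = x then φ g else 0 := by
        refine Finset.sum_congr rfl fun g _ => ?_
        rw [← Finset.sum_filter, Finset.sum_const, Nat.card_eq_fintype_card, Fintype.card_subtype]
        simp only [mem_fixedBy]
    _ = ∑ x, ∑ g, if g • x = x then φ g else 0 := Finset.sum_comm
    _ = ∑ x, ∑ g : stabilizer G x, φ g := by
        refine Finset.sum_congr rfl fun x _ => ?_
        rw [← Finset.sum_filter]
        exact Finset.sum_subtype _ (by simp) φ

end DoubleCounting

section IntUnitsHom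

variable {K : Type*} [Group K] [Fintype K] (χ : K →* ℤˣ)

theorem sum_intUnits_hom_eq_ite : ∑ k, (χ k : ℤ) = if χ = 1 then (Fintype.card K : ℤ) else 0 := by
  have hχ : (Units.coeHom ℤ).comp χ = 1 ↔ χ = 1 := by
    refine ⟨fun h => MonoidHom.ext fun k => Units.ext ?_, fun h => by rw [h, MonoidHom.comp_one]⟩
    simpa using DFunLike.congr_fun h k
  have := sum_hom_units ((Units.coeHom ℤ).comp χ)
  simp_rw [hχ] at this
  push_cast at this
  exact this

theorem sum_intUnits_hom_nonneg : 0 ≤ ∑ k, (χ k : ℤ) := by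
  rw [sum_intUnits_hom_eq_ite]
  split_ifs <;> positivity

theorem sum_intUnits_hom_eq_zero_iff : ∑ k, (χ k : ℤ) = 0 ↔ χ ≠ 1 := by
  rw [sum_intUnits_hom_eq_ite]
  split_ifs with h <;> simp [h, Fintype.card_ne_zero]

end IntUnitsHom

section CyclePoly

open Equiv Equiv.Perm MulAction

attribute [local instance] arrowAction

variable {Ω : Type*} [Fintype Ω]

def stabilizerSign {α : Type*} (G : Subgroup (Perm Ω)) (f : Ω → α) : stabilizer G f →* ℤˣ :=
  sign.comp (G.subtype.comp (stabilizer G f).subtype)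

theorem stabilizerSign_ne_one_of_le {α : Type*} {G₁ G₂ : Subgroup (Perm Ω)} (hle : G₁ ≤ G₂)
    (f : Ω → α) (h : stabilizerSign G₁ f ≠ 1) : stabilizerSign G₂ f ≠ 1 := by
  obtain ⟨g, hg⟩ := DFunLike.ne_iff.mp h
  exact DFunLike.ne_iff.mpr ⟨⟨⟨g, hle g.1.2⟩, g.2⟩, hg⟩

theorem eval_neg_natCast_cyclePoly (G : Subgroup (Perm Ω)) (a : ℕ) :
    (cyclePoly G).eval (-(a : ℤ)) =
      (-1) ^ Fintype.card Ω * ∑ f : Ω → Fin a, ∑ g, (stabilizerSign G f g : ℤ) := by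
  have hterm (g : G) : (-(a : ℤ)) ^ cycleCount (g : Perm Ω) =
      (-1) ^ Fintype.card Ω * (Nat.card (fixedBy (Ω → Fin a) g) • (sign (g : Perm Ω) : ℤ)) := by
    have hfix : Nat.card (fixedBy (Ω → Fin a) g) = a ^ cycleCount (g : Perm Ω) := by
      have := card_fixedBy_arrowAction (Ω := Ω) (Fin a) (g : Perm Ω)
      rwa [Nat.card_fin] at this
    rw [hfix, sign_eq_neg_one_pow_card_add_cycleCount, nsmul_eq_mul, neg_pow, pow_add]
    push_cast
    have hsq : ((-1 : ℤ) ^ Fintype.card Ω) * (-1) ^ Fintype.card Ω = 1 := by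
      rw [← mul_pow]; simp
    linear_combination
      (-((-1 : ℤ) ^ cycleCount (g : Perm Ω) * (a : ℤ) ^ cycleCount (g : Perm Ω))) * hsq
  calc (cyclePoly G).eval (-(a : ℤ)) = ∑ g : G, (-(a : ℤ)) ^ cycleCount (g : Perm Ω) := by
        simp [cyclePoly, eval_finsetSum]
    _ = _ := by
        rw [Finset.sum_congr rfl fun g _ => hterm g, ← Finset.mul_sum, sum_card_fixedBy_nsmul]
        simp only [stabilizerSign, MonoidHom.comp_apply, Subgroup.coe_subtype]
        -- the two sides differ only in their `Fintype` instances
        congr!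

end CyclePoly

theorem cyclePoly_neg_root_of_le_general {Ω : Type*} [Fintype Ω]
    (G₁ G₂ : Subgroup (Equiv.Perm Ω)) (hle : G₁ ≤ G₂)
    (a : ℕ) (h : (cyclePoly G₁).eval (-(a : ℤ)) = 0) :
    (cyclePoly G₂).eval (-(a : ℤ)) = 0 := by
  rw [eval_neg_natCast_cyclePoly] at h ⊢
  have hsum : ∑ f : Ω → Fin a, ∑ g, (stabilizerSign G₁ f g : ℤ) = 0 :=
    (mul_eq_zero.mp h).resolve_left (pow_ne_zero _ (by norm_num))
  have hG₁ (f : Ω → Fin a) : stabilizerSign G₁ f ≠ 1 :=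
    (sum_intUnits_hom_eq_zero_iff _).mp <|
      (Finset.sum_eq_zero_iff_of_nonneg fun f _ => sum_intUnits_hom_nonneg _).mp hsum f
        (Finset.mem_univ f)
  rw [Finset.sum_eq_zero fun f _ =>
    (sum_intUnits_hom_eq_zero_iff _).mpr (stabilizerSign_ne_one_of_le hle f (hG₁ f)), mul_zero]

theorem cyclePoly_neg_root_of_le {Ω : Type*} [Fintype Ω]
    (G₁ G₂ : Subgroup (Equiv.Perm Ω)) (hle : G₁ ≤ G₂)
    (a : ℕ) (ha : 0 < a) (h : (cyclePoly G₁).eval (-(a : ℤ)) = 0) :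
    (cyclePoly G₂).eval (-(a : ℤ)) = 0 :=
  cyclePoly_neg_root_of_le_general G₁ G₂ hle a h
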